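/- arXiv:2408.13048 — 3 statements merged into one kernel-verified Lean document; each statement's English description precedes it below -/
import Mathlib

section
/- Fundamental theorem of asset pricing under model uncertainty (single period): there exists no trading strategy that is an arbitrage under model uncertainty if and only if there exists a risk neutral probability measure Q, i.e. a probability measure Q on Ω with Q(ω) > 0 for every ω ∈ Ω and E_Q[ΔS*_m] = 0 for every m = 1,…,M. -/
/-! A risk-neutral measure is a strictly positive probability vector orthogonal to the space of
discounted gains `∑ m, h m * ΔS*_m`. Absence of arbitrage forces this space to meet the
nonnegative orthant only in `0`: a nonnegative, nonzero gain is positive at some state, which some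
model of the family charges. Stiemke's lemma, obtained by separating the standard simplex from the
gains space, then yields the risk-neutral measure. Conversely, under a risk-neutral `Q` every
strategy has `E_Q[V₁] = V₀`, which is `0` for a candidate arbitrage, while `Q > 0` makes
`E_Q[V₁] > 0` for a nonnegative `V₁` that is positive somewhere. -/

open Finset

variable {Ω : Type*} [Fintype Ω]

/-- A probability measure on the finite sample space `Ω`. -/
def IsProb (P : Ω → ℝ) : Prop := (∀ ω, 0 ≤ P ω) ∧ ∑ ω, P ω = 1

/-- Expectation of `X` under `P`: `E_P[X] = ∑ ω, P ω * X ω`. -/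
def expect (P X : Ω → ℝ) : ℝ := ∑ ω, P ω * X ω

/-- Discounted initial value of the portfolio `(h0, h)`. -/
def V0 {M : ℕ} (S0 : Fin M → ℝ) (h0 : ℝ) (h : Fin M → ℝ) : ℝ :=
  h0 + ∑ m, h m * S0 m

/-- Discounted time-1 value of the portfolio `(h0, h)`. -/
def V1 {M : ℕ} (S1 : Fin M → Ω → ℝ) (h0 : ℝ) (h : Fin M → ℝ) (ω : Ω) : ℝ :=
  h0 + ∑ m, h m * S1 m ω

/-- Arbitrage under model uncertainty given the family `Pfam` of actual probability
measures: zero initial value, nonnegative terminal value, and positive expected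
terminal value under some `P ∈ Pfam`. -/
def IsArbitrage {M : ℕ} (S0 : Fin M → ℝ) (S1 : Fin M → Ω → ℝ)
    (Pfam : Set (Ω → ℝ)) (h0 : ℝ) (h : Fin M → ℝ) : Prop :=
  V0 S0 h0 h = 0 ∧ (∀ ω, 0 ≤ V1 S1 h0 h ω) ∧ ∃ P ∈ Pfam, 0 < expect P (V1 S1 h0 h)


/-- Hahn–Banach separation; the separating functional vanishes on `L` because it is bounded
below there. -/
theorem Submodule.exists_dual_pos_on_of_disjoint {E : Type*} [TopologicalSpace E]
    [AddCommGroup E] [Module ℝ E] [IsTopologicalAddGroup E] [ContinuousSMul ℝ E]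
    [LocallyConvexSpace ℝ E] {s : Set E} (hs₁ : Convex ℝ s) (hs₂ : IsCompact s)
    (L : Submodule ℝ E) (hL : IsClosed (L : Set E)) (hsL : Disjoint s L) :
    ∃ f : StrongDual ℝ E, (∀ x ∈ s, 0 < f x) ∧ ∀ y ∈ L, f y = 0 := by
  obtain ⟨f, u, v, hfs, huv, hfL⟩ :=
    geometric_hahn_banach_compact_closed hs₁ hs₂ L.convex hL hsL
  have hf_zero : ∀ y ∈ L, f y = 0 := by
    intro y hy
    by_contra hne
    have := hfL _ (L.smul_mem ((v - 1) / f y) hy)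
    rw [map_smul, smul_eq_mul, div_mul_cancel₀ _ hne] at this
    linarith
  have hv : v < 0 := by simpa using hfL 0 L.zero_mem
  refine ⟨-f, fun x hx => ?_, fun y hy => by simp [hf_zero y hy]⟩
  have := hfs x hx
  simp only [neg_apply]
  linarith

theorem expect_pos {P X : Ω → ℝ} (hP : ∀ ω, 0 ≤ P ω) (hX : ∀ ω, 0 ≤ X ω) {ω₀ : Ω}
    (hPω₀ : 0 < P ω₀) (hXω₀ : 0 < X ω₀) : 0 < expect P X :=
  sum_pos' (fun ω _ => mul_nonneg (hP ω) (hX ω))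
    ⟨ω₀, mem_univ ω₀, mul_pos hPω₀ hXω₀⟩

theorem exists_pos_of_expect_pos {P X : Ω → ℝ} (hP : ∀ ω, 0 ≤ P ω) (h : 0 < expect P X) :
    ∃ ω, 0 < X ω := by
  obtain ⟨ω, -, hω⟩ := exists_lt_of_sum_lt (f := fun _ ↦ (0 : ℝ))
    (by simpa [_root_.expect] using h)
  exact ⟨ω, pos_of_mul_pos_right hω (hP ω)⟩

theorem expect_sum_mul {M : ℕ} (P : Ω → ℝ) (h : Fin M → ℝ) (X : Fin M → Ω → ℝ) :
    expect P (fun ω => ∑ m, h m * X m ω) = ∑ m, h m * expect P (X m) := by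
  simp only [_root_.expect, mul_sum]
  rw [sum_comm]
  simp only [mul_left_comm]

theorem stiemke [Nonempty Ω] (L : Submodule ℝ (Ω → ℝ)) (hL : ∀ g ∈ L, 0 ≤ g → g = 0) :
    ∃ Q : Ω → ℝ, IsProb Q ∧ (∀ ω, 0 < Q ω) ∧ ∀ g ∈ L, expect Q g = 0 := by
  classical
  have hdisj : Disjoint (stdSimplex ℝ Ω) L := by
    refine Set.disjoint_left.2 fun x ⟨hx₀, hx₁⟩ hxL => ?_
    simp [hL x hxL hx₀] at hx₁
  obtain ⟨f, hf_pos, hf_zero⟩ := L.exists_dual_pos_on_of_disjoint (convex_stdSimplex ℝ Ω)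
    (isCompact_stdSimplex ℝ Ω) (Submodule.closed_of_finiteDimensional L) hdisj
  set w : Ω → ℝ := fun ω => f (Pi.single ω 1)
  have hw : ∀ ω, 0 < w ω := fun ω => hf_pos _ (single_mem_stdSimplex ℝ ω)
  have hf : ∀ g, f g = expect w g := fun g => by
    have hsingle (ω : Ω) : (fun ω' => if ω = ω' then (1 : ℝ) else 0) = Pi.single ω 1 := by
      ext ω'; simp [Pi.single_apply, eq_comm]
    rw [← ContinuousLinearMap.coe_coe, LinearMap.pi_apply_eq_sum_univ]
    simp only [hsingle, _root_.expect, w, smul_eq_mul, mul_comm, ContinuousLinearMap.coe_coe]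
  have hsum : 0 < ∑ ω, w ω := sum_pos (fun ω _ => hw ω) univ_nonempty
  refine ⟨fun ω => w ω / ∑ ω', w ω', ⟨fun ω => (div_pos (hw ω) hsum).le, ?_⟩,
    fun ω => div_pos (hw ω) hsum, fun g hg => ?_⟩
  · rw [← sum_div, div_self hsum.ne']
  · simp only [_root_.expect, div_mul_eq_mul_div, ← sum_div]
    rw [← _root_.expect, ← hf, hf_zero g hg, zero_div]

section Market

variable {M : ℕ} (S0 : Fin M → ℝ) (S1 : Fin M → Ω → ℝ)

def gainsSpace : Submodule ℝ (Ω → ℝ) :=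
  Submodule.span ℝ (Set.range fun m ω => S1 m ω - S0 m)

theorem expect_V1_eq_V0 {Q : Ω → ℝ} (hQ : IsProb Q)
    (hQS : ∀ m, expect Q (fun ω => S1 m ω - S0 m) = 0) (h0 : ℝ) (h : Fin M → ℝ) :
    expect Q (V1 S1 h0 h) = V0 S0 h0 h := by
  have hV1 : V1 S1 h0 h = fun ω => V0 S0 h0 h + ∑ m, h m * (S1 m ω - S0 m) :=
    funext fun ω => by simp only [V1, V0, mul_sub, sum_sub_distrib]; ring
  have hgains := expect_sum_mul Q h fun m ω => S1 m ω - S0 m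
  simp only [hQS, mul_zero, sum_const_zero] at hgains
  rw [hV1, _root_.expect]
  simp only [mul_add, sum_add_distrib, ← sum_mul, hQ.2, one_mul]
  rw [← _root_.expect, hgains, add_zero]

/-- Buying `h` with borrowed money. -/
theorem isArbitrage_of_gains_nonneg {Pfam : Set (Ω → ℝ)} (hPfamprob : ∀ P ∈ Pfam, IsProb P)
    (hPfampos : ∀ ω : Ω, ∃ P ∈ Pfam, 0 < P ω) (h : Fin M → ℝ)
    (hg : ∀ ω, 0 ≤ ∑ m, h m * (S1 m ω - S0 m)) {ω₀ : Ω}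
    (hω₀ : 0 < ∑ m, h m * (S1 m ω₀ - S0 m)) :
    IsArbitrage S0 S1 Pfam (-∑ m, h m * S0 m) h := by
  have hV0 : V0 S0 (-∑ m, h m * S0 m) h = 0 := by simp [V0]
  have hV1 : ∀ ω, V1 S1 (-∑ m, h m * S0 m) h ω = ∑ m, h m * (S1 m ω - S0 m) := fun ω => by
    simp only [V1, mul_sub, sum_sub_distrib]; ring
  obtain ⟨P, hP, hPω₀⟩ := hPfampos ω₀
  refine ⟨hV0, fun ω => (hV1 ω).symm ▸ hg ω, P, hP, ?_⟩
  exact expect_pos (hPfamprob P hP).1 (fun ω => (hV1 ω).symm ▸ hg ω) hPω₀ ((hV1 ω₀).symm ▸ hω₀)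

theorem eq_zero_of_mem_gainsSpace_of_nonneg {Pfam : Set (Ω → ℝ)}
    (hPfamprob : ∀ P ∈ Pfam, IsProb P) (hPfampos : ∀ ω : Ω, ∃ P ∈ Pfam, 0 < P ω)
    (hNA : ¬ ∃ (h0 : ℝ) (h : Fin M → ℝ), IsArbitrage S0 S1 Pfam h0 h)
    {g : Ω → ℝ} (hg : g ∈ gainsSpace S0 S1) (hg₀ : 0 ≤ g) : g = 0 := by
  obtain ⟨h, rfl⟩ := (Submodule.mem_span_range_iff_exists_fun ℝ).1 hg
  have happly (ω : Ω) : (∑ m, h m • fun ω => S1 m ω - S0 m) ω = ∑ m, h m * (S1 m ω - S0 m) := by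
    simp
  by_contra hne
  obtain ⟨ω₀, hω₀⟩ := Function.ne_iff.1 hne
  have hpos := (hg₀ ω₀).lt_of_ne' hω₀
  rw [happly] at hpos
  exact hNA ⟨_, h, isArbitrage_of_gains_nonneg S0 S1 hPfamprob hPfampos h
    (fun ω => happly ω ▸ hg₀ ω) hpos⟩

end Market

theorem fundamental_theorem_asset_pricing_uncertainty_general [Nonempty Ω] {M : ℕ}
    (S0 : Fin M → ℝ) (S1 : Fin M → Ω → ℝ)
    (Pfam : Set (Ω → ℝ))
    (hPfamprob : ∀ P ∈ Pfam, IsProb P)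
    (hPfampos : ∀ ω : Ω, ∃ P ∈ Pfam, 0 < P ω) :
    (¬ ∃ (h0 : ℝ) (h : Fin M → ℝ), IsArbitrage S0 S1 Pfam h0 h) ↔
      ∃ Q : Ω → ℝ, IsProb Q ∧ (∀ ω, 0 < Q ω) ∧
        ∀ m : Fin M, expect Q (fun ω => S1 m ω - S0 m) = 0 := by
  constructor
  · intro hNA
    obtain ⟨Q, hQ, hQpos, hQ_gains⟩ := stiemke (gainsSpace S0 S1) fun g hg hg₀ =>
      eq_zero_of_mem_gainsSpace_of_nonneg S0 S1 hPfamprob hPfampos hNA hg hg₀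
    exact ⟨Q, hQ, hQpos, fun m => hQ_gains _ (Submodule.subset_span ⟨m, rfl⟩)⟩
  · rintro ⟨Q, hQ, hQpos, hQS⟩ ⟨h0, h, hV0, hV1, P, hP, hEP⟩
    obtain ⟨ω, hω⟩ := exists_pos_of_expect_pos (hPfamprob P hP).1 hEP
    have hEQ := expect_pos hQ.1 hV1 (hQpos ω) hω
    rw [expect_V1_eq_V0 S0 S1 hQ hQS, hV0] at hEQ
    exact hEQ.false

/-- Fundamental theorem of asset pricing under model uncertainty (single period). -/
theorem fundamental_theorem_asset_pricing_uncertainty [Nonempty Ω] {M : ℕ}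
    (S0 : Fin M → ℝ) (S1 : Fin M → Ω → ℝ)
    (Pfam : Set (Ω → ℝ)) (hPfamne : Pfam.Nonempty)
    (hPfamprob : ∀ P ∈ Pfam, IsProb P)
    (hPfampos : ∀ ω : Ω, ∃ P ∈ Pfam, 0 < P ω) :
    (¬ ∃ (h0 : ℝ) (h : Fin M → ℝ), IsArbitrage S0 S1 Pfam h0 h) ↔
      ∃ Q : Ω → ℝ, IsProb Q ∧ (∀ ω, 0 < Q ω) ∧
        ∀ m : Fin M, expect Q (fun ω => S1 m ω - S0 m) = 0 :=
  fundamental_theorem_asset_pricing_uncertainty_general S0 S1 Pfam hPfamprob hPfampos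
end

section
/- Fundamental theorem of asset pricing under model uncertainty with short sales prohibitions (single period): there exists no trading strategy with h_m ≥ 0 for all m = 1,…,M that is an arbitrage under model uncertainty if and only if there exists a probability measure Q on Ω with Q(ω) > 0 for every ω ∈ Ω and E_Q[ΔS*_m] ≤ 0 for every m = 1,…,M. -/
open Finset

variable {Ω : Type*} [Fintype Ω]

/-!
Absence of arbitrage says that the cone `C` of gains `∑ₘ hₘ ΔS*ₘ`, `h ≥ 0`, misses the standard
simplex. A finitely generated cone is closed (by the conic Carathéodory theorem it is a finite union
of images of orthants under injective linear maps), so Farkas' separation for proper cones yields a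
functional that is `≥ 0` on `C` and `< 0` on the simplex; normalising its negative gives `Q`.
Conversely, under such a `Q` every short-sale-free strategy with zero initial value has
nonpositive expected terminal value, which rules out a nonnegative, nonzero payoff.
-/

open PointedCone

section Caratheodory

variable {𝕜 ι E : Type*} [Field 𝕜] [LinearOrder 𝕜] [IsStrictOrderedRing 𝕜]
  [AddCommGroup E] [Module 𝕜 E] {v : ι → E}

/-- Subtracting from `c` the largest multiple of a linear relation `g` that keeps it nonnegative
kills one coefficient. -/
lemma exists_erase_sum_smul_eq [DecidableEq ι] {s : Finset ι} {c g : ι → 𝕜}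
    (hc : ∀ i ∈ s, 0 ≤ c i) (hg : ∑ i ∈ s, g i • v i = 0) (hpos : ∃ i ∈ s, 0 < g i) :
    ∃ j ∈ s, ∃ c' : ι → 𝕜, (∀ i ∈ s.erase j, 0 ≤ c' i) ∧
      ∑ i ∈ s.erase j, c' i • v i = ∑ i ∈ s, c i • v i := by
  obtain ⟨i₀, hi₀, hgi₀⟩ := hpos
  obtain ⟨j, hjT, hjmin⟩ := (s.filter (0 < g ·)).exists_min_image (fun i => c i / g i)
    ⟨i₀, mem_filter.2 ⟨hi₀, hgi₀⟩⟩
  obtain ⟨hj, hgj⟩ := mem_filter.1 hjT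
  set t := c j / g j
  have ht : 0 ≤ t := div_nonneg (hc j hj) hgj.le
  refine ⟨j, hj, fun i => c i - t * g i, fun i hi => ?_, ?_⟩
  · have hi := mem_of_mem_erase hi
    rcases lt_or_ge 0 (g i) with hgi | hgi
    · have := (le_div_iff₀ hgi).1 (hjmin i (mem_filter.2 ⟨hi, hgi⟩))
      linarith
    · nlinarith [hc i hi]
  · have hj0 : c j - t * g j = 0 := by simp [t, hgj.ne']
    rw [sum_erase _ (by simp [hj0])]
    simp only [sub_smul, sum_sub_distrib, mul_smul, ← smul_sum, hg, smul_zero, sub_zero]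

/-- Conic Carathéodory theorem. -/
theorem exists_linearIndepOn_sum_smul_eq (s : Finset ι) {c : ι → 𝕜}
    (hc : ∀ i ∈ s, 0 ≤ c i) :
    ∃ t ⊆ s, LinearIndepOn 𝕜 v (t : Set ι) ∧ ∃ c' : ι → 𝕜, (∀ i ∈ t, 0 ≤ c' i) ∧
      ∑ i ∈ t, c' i • v i = ∑ i ∈ s, c i • v i := by
  classical
  induction s using Finset.strongInduction generalizing c with
  | H s ih =>
  by_cases hli : LinearIndepOn 𝕜 v (s : Set ι)
  · exact ⟨s, subset_rfl, hli, c, hc, rfl⟩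
  obtain ⟨g, hg, i, hi, hgi⟩ : ∃ g : ι → 𝕜, ∑ i ∈ s, g i • v i = 0 ∧ ∃ i ∈ s, g i ≠ 0 := by
    simpa [linearIndepOn_finset_iff] using hli
  obtain ⟨j, hj, c', hc', hsum⟩ : ∃ j ∈ s, ∃ c' : ι → 𝕜, (∀ i ∈ s.erase j, 0 ≤ c' i) ∧
      ∑ i ∈ s.erase j, c' i • v i = ∑ i ∈ s, c i • v i := by
    rcases hgi.lt_or_gt with hneg | hpos
    · exact exists_erase_sum_smul_eq (g := -g) hc (by simp [neg_smul, hg]) ⟨i, hi, by simpa⟩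
    · exact exists_erase_sum_smul_eq hc hg ⟨i, hi, hpos⟩
  obtain ⟨t, hts, htli, c'', hc'', hsum'⟩ := ih _ (erase_ssubset hj) hc'
  exact ⟨t, hts.trans (erase_subset _ _), htli, c'', hc'', hsum'.trans hsum⟩

end Caratheodory

section ClosedCone

variable {ι E : Type*} [AddCommGroup E] [Module ℝ E]

lemma mem_hull_range_iff [Fintype ι] {v : ι → E} {x : E} :
    x ∈ hull ℝ (Set.range v) ↔ ∃ c : ι → ℝ, 0 ≤ c ∧ ∑ i, c i • v i = x := by
  rw [Submodule.mem_span_range_iff_exists_fun]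
  constructor
  · rintro ⟨c, rfl⟩
    exact ⟨fun i => c i, fun i => (c i).2, rfl⟩
  · rintro ⟨c, hc, rfl⟩
    exact ⟨fun i => ⟨c i, hc i⟩, rfl⟩

lemma exists_linearIndepOn_mem_hull_image [Finite ι] {v : ι → E} {x : E}
    (hx : x ∈ hull ℝ (Set.range v)) :
    ∃ t : Finset ι, LinearIndepOn ℝ v (t : Set ι) ∧ x ∈ hull ℝ (v '' t) := by
  have := Fintype.ofFinite ι
  obtain ⟨c, hc, rfl⟩ := mem_hull_range_iff.1 hx
  obtain ⟨t, -, htli, c', hc', hsum⟩ :=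
    exists_linearIndepOn_sum_smul_eq (v := v) univ fun i _ => hc i
  refine ⟨t, htli, ?_⟩
  rw [← hsum]
  exact Submodule.sum_mem _ fun i hi =>
    smul_mem _ (hc' i hi) (subset_hull (Set.mem_image_of_mem v hi))

variable [TopologicalSpace E] [IsTopologicalAddGroup E] [ContinuousSMul ℝ E] [T2Space E]

lemma isClosed_hull_range_of_linearIndependent [Fintype ι] {v : ι → E}
    (hv : LinearIndependent ℝ v) : IsClosed (hull ℝ (Set.range v) : Set E) := by
  have hC : (hull ℝ (Set.range v) : Set E) =
      Fintype.linearCombination ℝ v '' Set.Ici 0 := by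
    ext x
    simp [mem_hull_range_iff, Fintype.linearCombination_apply]
  rw [hC]
  exact (LinearMap.isClosedEmbedding_of_injective (LinearMap.ker_eq_bot.2
    hv.fintypeLinearCombination_injective)).isClosedMap _ isClosed_Ici

theorem isClosed_hull_range [Finite ι] (v : ι → E) :
    IsClosed (hull ℝ (Set.range v) : Set E) := by
  have hC : (hull ℝ (Set.range v) : Set E) =
      ⋃ t ∈ {t : Finset ι | LinearIndepOn ℝ v (t : Set ι)}, hull ℝ (v '' t) := by
    refine subset_antisymm (fun x hx => ?_) (Set.iUnion₂_subset fun t _ => ?_)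
    · obtain ⟨t, htli, hxt⟩ := exists_linearIndepOn_mem_hull_image hx
      exact Set.mem_biUnion htli hxt
    · exact Submodule.span_mono (Set.image_subset_range v t)
  rw [hC]
  refine (Set.toFinite _).isClosed_biUnion fun t htli => ?_
  rw [Set.image_eq_range]
  exact isClosed_hull_range_of_linearIndependent htli

end ClosedCone

lemma apply_eq_sum_mul_apply_single [DecidableEq Ω] {F : Type*} [FunLike F (Ω → ℝ) ℝ]
    [LinearMapClass F ℝ (Ω → ℝ) ℝ] (f : F) (x : Ω → ℝ) : f x = ∑ ω, x ω * f (Pi.single ω 1) := by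
  conv_lhs => rw [← univ_sum_single x]
  simp only [map_sum]
  congr! with ω
  rw [← smul_eq_mul, ← map_smul, ← Pi.single_smul, smul_eq_mul, mul_one]

lemma isProb_div_sum [Nonempty Ω] {q : Ω → ℝ} (hq : ∀ ω, 0 < q ω) :
    IsProb fun ω => q ω / ∑ ω', q ω' := by
  have hZ : 0 < ∑ ω, q ω := sum_pos (fun ω _ => hq ω) univ_nonempty
  exact ⟨fun ω => div_nonneg (hq ω).le hZ.le, by rw [← sum_div, div_self hZ.ne']⟩

lemma expect_weight_div (P X : Ω → ℝ) (a : ℝ) :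
    expect (fun ω => P ω / a) X = expect P X / a := by
  simp only [_root_.expect, sum_div, div_mul_eq_mul_div]

lemma expect_pos_of_pos_at {P X : Ω → ℝ} (hP : ∀ ω, 0 ≤ P ω) (hX : 0 ≤ X) {ω₀ : Ω}
    (hPω₀ : 0 < P ω₀) (hXω₀ : 0 < X ω₀) : 0 < expect P X :=
  sum_pos' (fun ω _ => mul_nonneg (hP ω) (hX ω)) ⟨ω₀, mem_univ _, mul_pos hPω₀ hXω₀⟩

/-- A conic version of Stiemke's lemma. -/
theorem exists_pos_prob_expect_nonpos [Nonempty Ω] {ι : Type*} [Finite ι] (v : ι → Ω → ℝ)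
    (hv : Disjoint (hull ℝ (Set.range v) : Set (Ω → ℝ)) (stdSimplex ℝ Ω)) :
    ∃ Q : Ω → ℝ, IsProb Q ∧ (∀ ω, 0 < Q ω) ∧ ∀ i, expect Q (v i) ≤ 0 := by
  classical
  obtain ⟨f, hfC, hfK⟩ := ProperCone.hyperplane_separation
    { toSubmodule := hull ℝ (Set.range v), isClosed' := isClosed_hull_range v }
    (convex_stdSimplex ℝ Ω) (isCompact_stdSimplex ℝ Ω) hv.symm
  set q : Ω → ℝ := fun ω => -f (Pi.single ω 1)
  have hq : ∀ ω, 0 < q ω := fun ω => neg_pos.2 (hfK _ (single_mem_stdSimplex ℝ ω))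
  have hfq : ∀ x, expect q x = -f x := fun x => by
    rw [_root_.expect, apply_eq_sum_mul_apply_single f x, ← sum_neg_distrib]
    exact sum_congr rfl fun ω _ => by simp only [q]; ring
  refine ⟨_, isProb_div_sum hq, fun ω => div_pos (hq ω) (sum_pos (fun ω _ => hq ω) univ_nonempty),
    fun i => ?_⟩
  rw [expect_weight_div, hfq]
  exact div_nonpos_of_nonpos_of_nonneg (neg_nonpos.2 (hfC _ (subset_hull ⟨i, rfl⟩)))
    (sum_nonneg fun ω _ => (hq ω).le)

section Market

variable {M : ℕ} {S0 : Fin M → ℝ} {S1 : Fin M → Ω → ℝ} {h0 : ℝ} {h : Fin M → ℝ}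

omit [Fintype Ω] in
lemma V1_sub_V0 (ω : Ω) :
    V1 S1 h0 h ω - V0 S0 h0 h = ∑ m, h m * (S1 m ω - S0 m) := by
  simp only [V1, V0, mul_sub, sum_sub_distrib]
  ring

omit [Fintype Ω] in
lemma V1_eq_sum_smul_of_V0_eq_zero (hV0 : V0 S0 h0 h = 0) :
    V1 S1 h0 h = ∑ m, h m • fun ω => S1 m ω - S0 m := by
  ext ω
  simp only [Finset.sum_apply, Pi.smul_apply, smul_eq_mul]
  rw [← V1_sub_V0, hV0, sub_zero]

lemma expect_V1 {Q : Ω → ℝ} (hQ : ∑ ω, Q ω = 1) :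
    expect Q (V1 S1 h0 h) = V0 S0 h0 h + ∑ m, h m * expect Q (fun ω => S1 m ω - S0 m) := by
  have hV1 : V1 S1 h0 h = fun ω => V0 S0 h0 h + ∑ m, h m * (S1 m ω - S0 m) :=
    funext fun ω => by rw [← V1_sub_V0]; ring
  simp only [hV1, _root_.expect, mul_add, sum_add_distrib, ← sum_mul, hQ, one_mul, mul_sum]
  rw [sum_comm]
  exact congrArg _ (sum_congr rfl fun m _ => sum_congr rfl fun ω _ => by ring)

theorem not_isArbitrage_of_expect_nonpos {Pfam : Set (Ω → ℝ)} {Q : Ω → ℝ} (hQ : IsProb Q)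
    (hQpos : ∀ ω, 0 < Q ω) (hQS : ∀ m, expect Q (fun ω => S1 m ω - S0 m) ≤ 0)
    (hh : ∀ m, 0 ≤ h m) : ¬ IsArbitrage S0 S1 Pfam h0 h := by
  rintro ⟨hV0, hV1, P, -, hP⟩
  have hne : V1 S1 h0 h ≠ 0 := by
    rintro hzero
    simp [hzero, _root_.expect] at hP
  obtain ⟨ω₀, hω₀⟩ := (Pi.lt_def.1 (lt_of_le_of_ne hV1 (Ne.symm hne))).2
  have hgain : expect Q (V1 S1 h0 h) ≤ 0 := by
    rw [expect_V1 hQ.2, hV0, zero_add]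
    exact sum_nonpos fun m _ => mul_nonpos_of_nonneg_of_nonpos (hh m) (hQS m)
  exact (expect_pos_of_pos_at (fun ω => (hQpos ω).le) hV1 (hQpos ω₀) hω₀).not_ge hgain

theorem isArbitrage_of_mem_stdSimplex {Pfam : Set (Ω → ℝ)} (hPfamprob : ∀ P ∈ Pfam, IsProb P)
    (hPfampos : ∀ ω : Ω, ∃ P ∈ Pfam, 0 < P ω)
    (hx : ∑ m, h m • (fun ω => S1 m ω - S0 m) ∈ stdSimplex ℝ Ω) :
    IsArbitrage S0 S1 Pfam (-∑ m, h m * S0 m) h := by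
  have hV0 : V0 S0 (-∑ m, h m * S0 m) h = 0 := by simp [V0]
  rw [IsArbitrage, V1_eq_sum_smul_of_V0_eq_zero hV0]
  refine ⟨hV0, hx.1, ?_⟩
  have hne : ∑ m, h m • (fun ω => S1 m ω - S0 m) ≠ 0 := by
    intro hzero
    have hsum := hx.2
    rw [hzero] at hsum
    simp at hsum
  obtain ⟨ω₀, hω₀⟩ := (Pi.lt_def.1 (lt_of_le_of_ne hx.1 (Ne.symm hne))).2
  obtain ⟨P, hP, hPω₀⟩ := hPfampos ω₀
  exact ⟨P, hP, expect_pos_of_pos_at (hPfamprob P hP).1 hx.1 hPω₀ hω₀⟩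

end Market

theorem fundamental_theorem_short_sales_general [Nonempty Ω] {M : ℕ}
    (S0 : Fin M → ℝ) (S1 : Fin M → Ω → ℝ)
    (Pfam : Set (Ω → ℝ))
    (hPfamprob : ∀ P ∈ Pfam, IsProb P)
    (hPfampos : ∀ ω : Ω, ∃ P ∈ Pfam, 0 < P ω) :
    (¬ ∃ (h0 : ℝ) (h : Fin M → ℝ), (∀ m, 0 ≤ h m) ∧ IsArbitrage S0 S1 Pfam h0 h) ↔
      ∃ Q : Ω → ℝ, IsProb Q ∧ (∀ ω, 0 < Q ω) ∧
        ∀ m : Fin M, expect Q (fun ω => S1 m ω - S0 m) ≤ 0 := by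
  constructor
  · intro hNA
    refine exists_pos_prob_expect_nonpos _ (Set.disjoint_left.2 fun x hxC hxK => ?_)
    obtain ⟨h, hh, rfl⟩ := mem_hull_range_iff.1 hxC
    exact hNA ⟨_, h, hh, isArbitrage_of_mem_stdSimplex hPfamprob hPfampos hxK⟩
  · rintro ⟨Q, hQ, hQpos, hQS⟩ ⟨h0, h, hh, hArb⟩
    exact not_isArbitrage_of_expect_nonpos hQ hQpos hQS hh hArb

/-- Fundamental theorem of asset pricing under model uncertainty with short sales
prohibitions (single period). -/
theorem fundamental_theorem_short_sales [Nonempty Ω] {M : ℕ}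
    (S0 : Fin M → ℝ) (S1 : Fin M → Ω → ℝ)
    (Pfam : Set (Ω → ℝ)) (hPfamne : Pfam.Nonempty)
    (hPfamprob : ∀ P ∈ Pfam, IsProb P)
    (hPfampos : ∀ ω : Ω, ∃ P ∈ Pfam, 0 < P ω) :
    (¬ ∃ (h0 : ℝ) (h : Fin M → ℝ), (∀ m, 0 ≤ h m) ∧ IsArbitrage S0 S1 Pfam h0 h) ↔
      ∃ Q : Ω → ℝ, IsProb Q ∧ (∀ ω, 0 < Q ω) ∧
        ∀ m : Fin M, expect Q (fun ω => S1 m ω - S0 m) ≤ 0 :=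
  fundamental_theorem_short_sales_general S0 S1 Pfam hPfamprob hPfampos
end

section
/- Necessary condition for no-arbitrage under model uncertainty with short sales prohibitions (single period): if there exists no trading strategy with h_m ≥ 0 for all m = 1,…,M that is an arbitrage under model uncertainty, then there exists a weak risk neutral nonlinear expectation, i.e. a nonempty family 𝒬 of probability measures on Ω such that for every ω ∈ Ω there is some Q ∈ 𝒬 with Q(ω) > 0, and for every m = 1,…,M the infimum of the set {E_Q[ΔS*_m] : Q ∈ 𝒬} is ≤ 0. -/
/-!
If some `ΔS*_m` takes a negative value at `ω₀`, a full-support measure putting enough weight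
on `ω₀` gives it a nonpositive expectation. Otherwise `ΔS*_m ≥ 0`, and buying one unit of
security `m` on credit is not an arbitrage only if `ΔS*_m = 0` at every state charged by some
`P ∈ 𝒫`, i.e. everywhere. Hence the family of all full-support probability measures is a weak
risk neutral nonlinear expectation.
-/

open Finset

variable {Ω : Type*} [Fintype Ω]

def fullSupportProbs (Ω : Type*) [Fintype Ω] : Set (Ω → ℝ) :=
  {Q | IsProb Q ∧ ∀ ω, 0 < Q ω}

noncomputable def normalizeWeights (w : Ω → ℝ) : Ω → ℝ := fun ω => w ω / ∑ ω', w ω'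

theorem normalizeWeights_mem_fullSupportProbs [Nonempty Ω] {w : Ω → ℝ} (hw : ∀ ω, 0 < w ω) :
    normalizeWeights w ∈ fullSupportProbs Ω := by
  have hsum : 0 < ∑ ω, w ω := Finset.sum_pos (fun ω _ => hw ω) univ_nonempty
  refine ⟨⟨fun ω => (div_pos (hw ω) hsum).le, ?_⟩, fun ω => div_pos (hw ω) hsum⟩
  simp only [normalizeWeights, ← Finset.sum_div, div_self hsum.ne']

theorem expect_normalizeWeights (w X : Ω → ℝ) :
    _root_.expect (normalizeWeights w) X = _root_.expect w X / ∑ ω, w ω := by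
  simp only [_root_.expect, normalizeWeights, Finset.sum_div, div_mul_eq_mul_div]

theorem fullSupportProbs_nonempty [Nonempty Ω] : (fullSupportProbs Ω).Nonempty :=
  ⟨_, normalizeWeights_mem_fullSupportProbs fun _ => one_pos⟩

theorem exists_mem_fullSupportProbs_expect_nonpos_of_neg [Nonempty Ω] [DecidableEq Ω]
    {X : Ω → ℝ} {ω₀ : Ω} (hω₀ : X ω₀ < 0) :
    ∃ Q ∈ fullSupportProbs Ω, expect Q X ≤ 0 := by
  -- the extra weight `K` at `ω₀` is chosen so that `K * X ω₀ = -|∑ ω, X ω|`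
  set K := |∑ ω, X ω| / -X ω₀
  have hK : 0 ≤ K := div_nonneg (abs_nonneg _) (neg_nonneg.2 hω₀.le)
  set w : Ω → ℝ := fun ω => 1 + if ω = ω₀ then K else 0
  have hw : ∀ ω, 0 < w ω := fun ω => by
    simp only [w]; split_ifs <;> linarith
  have hE : expect w X = ∑ ω, X ω - |∑ ω, X ω| := by
    have hKX : K * X ω₀ = -|∑ ω, X ω| := by
      simp only [K]; field_simp [hω₀.ne]
    simp only [_root_.expect, w, add_mul, one_mul, ite_mul, zero_mul, Finset.sum_add_distrib,
      Finset.sum_ite_eq', Finset.mem_univ, if_true, hKX, sub_eq_add_neg]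
  refine ⟨_, normalizeWeights_mem_fullSupportProbs hw, ?_⟩
  rw [expect_normalizeWeights, hE]
  exact div_nonpos_of_nonpos_of_nonneg (sub_nonpos.2 (le_abs_self _))
    (Finset.sum_nonneg fun ω _ => (hw ω).le)

theorem exists_mem_fullSupportProbs_expect_nonpos [Nonempty Ω] {X : Ω → ℝ}
    (hX : (∀ ω, 0 ≤ X ω) → ∀ ω, X ω = 0) :
    ∃ Q ∈ fullSupportProbs Ω, expect Q X ≤ 0 := by
  classical
  by_cases hneg : ∃ ω₀, X ω₀ < 0
  · obtain ⟨ω₀, hω₀⟩ := hneg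
    exact exists_mem_fullSupportProbs_expect_nonpos_of_neg hω₀
  · have hzero := hX fun ω => not_lt.1 fun h => hneg ⟨ω, h⟩
    obtain ⟨Q, hQ⟩ := fullSupportProbs_nonempty (Ω := Ω)
    exact ⟨Q, hQ, by simp [_root_.expect, hzero]⟩

theorem eq_zero_of_expect_nonpos {P X : Ω → ℝ} (hP : ∀ ω, 0 ≤ P ω) (hX : ∀ ω, 0 ≤ X ω)
    (hE : expect P X ≤ 0) {ω : Ω} (hω : 0 < P ω) : X ω = 0 := by
  have hterms : ∀ ω ∈ univ, 0 ≤ P ω * X ω := fun ω _ => mul_nonneg (hP ω) (hX ω)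
  have hsum : expect P X = 0 := le_antisymm hE (Finset.sum_nonneg hterms)
  have hterm : P ω * X ω = 0 := (Finset.sum_eq_zero_iff_of_nonneg hterms).1 hsum ω (mem_univ ω)
  exact (mul_eq_zero.1 hterm).resolve_left hω.ne'

theorem V0_buyOne {M : ℕ} (S0 : Fin M → ℝ) (m : Fin M) : V0 S0 (-S0 m) (Pi.single m 1) = 0 := by
  simp [V0, Pi.single_apply]

theorem V1_buyOne {α : Type*} {M : ℕ} (S0 : Fin M → ℝ) (S1 : Fin M → α → ℝ) (m : Fin M) :
    V1 S1 (-S0 m) (Pi.single m 1) = fun ω => S1 m ω - S0 m := by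
  ext ω
  simp [V1, Pi.single_apply, neg_add_eq_sub]

theorem increment_eq_zero_of_nonneg {M : ℕ} {S0 : Fin M → ℝ} {S1 : Fin M → Ω → ℝ}
    {Pfam : Set (Ω → ℝ)} (hPfamprob : ∀ P ∈ Pfam, IsProb P)
    (hPfampos : ∀ ω : Ω, ∃ P ∈ Pfam, 0 < P ω)
    (hNA : ¬ ∃ (h0 : ℝ) (h : Fin M → ℝ), (∀ m, 0 ≤ h m) ∧ IsArbitrage S0 S1 Pfam h0 h)
    (m : Fin M) (hm : ∀ ω, 0 ≤ S1 m ω - S0 m) (ω : Ω) : S1 m ω - S0 m = 0 := by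
  obtain ⟨P, hP, hPω⟩ := hPfampos ω
  refine eq_zero_of_expect_nonpos (hPfamprob P hP).1 hm (not_lt.1 fun hpos => hNA ?_) hPω
  have hnonneg : (0 : Fin M → ℝ) ≤ Pi.single m 1 := Pi.single_nonneg.2 zero_le_one
  refine ⟨-S0 m, Pi.single m 1, hnonneg, V0_buyOne S0 m, ?_, P, hP, ?_⟩
  · rw [V1_buyOne]; exact hm
  · rwa [V1_buyOne]

theorem no_arbitrage_implies_weak_risk_neutral_general [Nonempty Ω] {M : ℕ}
    (S0 : Fin M → ℝ) (S1 : Fin M → Ω → ℝ)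
    (Pfam : Set (Ω → ℝ))
    (hPfamprob : ∀ P ∈ Pfam, IsProb P)
    (hPfampos : ∀ ω : Ω, ∃ P ∈ Pfam, 0 < P ω)
    (hNA : ¬ ∃ (h0 : ℝ) (h : Fin M → ℝ), (∀ m, 0 ≤ h m) ∧ IsArbitrage S0 S1 Pfam h0 h) :
    ∃ 𝒬 : Set (Ω → ℝ), 𝒬.Nonempty ∧ (∀ Q ∈ 𝒬, IsProb Q) ∧
      (∀ ω : Ω, ∃ Q ∈ 𝒬, 0 < Q ω) ∧
      ∀ m : Fin M,
        sInf {x : ℝ | ∃ Q ∈ 𝒬, x = expect Q (fun ω => S1 m ω - S0 m)} ≤ 0 := by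
  obtain ⟨Q₀, hQ₀⟩ := fullSupportProbs_nonempty (Ω := Ω)
  refine ⟨fullSupportProbs Ω, ⟨Q₀, hQ₀⟩, fun Q hQ => hQ.1, fun ω => ⟨Q₀, hQ₀, hQ₀.2 ω⟩,
    fun m => ?_⟩
  obtain ⟨Q, hQ, hE⟩ := exists_mem_fullSupportProbs_expect_nonpos
    (increment_eq_zero_of_nonneg hPfamprob hPfampos hNA m)
  exact Real.sInf_nonpos' ⟨_, ⟨Q, hQ, rfl⟩, hE⟩

/-- Necessary condition for no-arbitrage under model uncertainty with short sales
prohibitions: existence of a weak risk neutral nonlinear expectation. -/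
theorem no_arbitrage_implies_weak_risk_neutral [Nonempty Ω] {M : ℕ}
    (S0 : Fin M → ℝ) (S1 : Fin M → Ω → ℝ)
    (Pfam : Set (Ω → ℝ)) (hPfamne : Pfam.Nonempty)
    (hPfamprob : ∀ P ∈ Pfam, IsProb P)
    (hPfampos : ∀ ω : Ω, ∃ P ∈ Pfam, 0 < P ω)
    (hNA : ¬ ∃ (h0 : ℝ) (h : Fin M → ℝ), (∀ m, 0 ≤ h m) ∧ IsArbitrage S0 S1 Pfam h0 h) :
    ∃ 𝒬 : Set (Ω → ℝ), 𝒬.Nonempty ∧ (∀ Q ∈ 𝒬, IsProb Q) ∧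
      (∀ ω : Ω, ∃ Q ∈ 𝒬, 0 < Q ω) ∧
      ∀ m : Fin M,
        sInf {x : ℝ | ∃ Q ∈ 𝒬, x = expect Q (fun ω => S1 m ω - S0 m)} ≤ 0 :=
  no_arbitrage_implies_weak_risk_neutral_general S0 S1 Pfam hPfamprob hPfampos hNA
end
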